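/- arXiv:1706.08989 — 3 statements merged into one kernel-verified Lean document; each statement's English description precedes it below -/
import Mathlib

section
/- Let J^{(3)} : ℤ → ℚ denote the third order Jacobsthal sequence extended to all integers, and for a positive integer r let ε_r = 2 if r ≡ 0 (mod 3) and ε_r = −1 otherwise. Then for all integers r, s, n with r ≥ 1, 0 ≤ s < r and n ≥ 3, J^{(3)}_{rn+s} = (2^r + ε_r)·J^{(3)}_{r(n−1)+s} − (2^r·ε_r + 1)·J^{(3)}_{r(n−2)+s} + 2^r·J^{(3)}_{r(n−3)+s}. -/
/-- Third order Jacobsthal numbers on natural indices: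
`J₀ = 0, J₁ = J₂ = 1`, `J_{n+3} = J_{n+2} + J_{n+1} + 2 J_n`. -/
def J3fwd : ℕ → ℚ
  | 0 => 0
  | 1 => 1
  | 2 => 1
  | n + 3 => J3fwd (n + 2) + J3fwd (n + 1) + 2 * J3fwd n

/-- The backward extension: `J3bwd n = J^{(3)}_{-n}`, obtained from
`J_n = (J_{n+3} − J_{n+2} − J_{n+1}) / 2`. -/
def J3bwd : ℕ → ℚ
  | 0 => 0
  | 1 => 0
  | 2 => 1 / 2
  | n + 3 => (J3bwd n - J3bwd (n + 1) - J3bwd (n + 2)) / 2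

/-- Third order Jacobsthal sequence extended to all integers. -/
def J3 : ℤ → ℚ
  | Int.ofNat n => J3fwd n
  | Int.negSucc n => J3bwd (n + 1)

/-- `ε_r = ω₁^r + ω₂^r = 2` if `3 ∣ r` and `−1` otherwise. -/
noncomputable def eps (r : ℤ) : ℚ := if (3 : ℤ) ∣ r then 2 else -1

/-!
Binet-type formula: `J3 m = (2 ^ (m + 1) + P m) / 7` for every integer `m`, where `P` is the
3-periodic sequence `-2, 3, -1, …` coming from the roots `ω₁, ω₂` of `x² + x + 1`. Along an
arithmetic progression of difference `r`, the geometric part has ratio `2 ^ r` and the periodic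
part satisfies `x_{k+2} = ε_r x_{k+1} - x_k`, so `J3` satisfies the recurrence with characteristic
polynomial `(x - 2 ^ r) (x² - ε_r x + 1)`, which is the claimed one.
-/

def J3periodic (m : ℤ) : ℚ := if m % 3 = 0 then -2 else if m % 3 = 1 then 3 else -1

lemma J3periodic_eq_of_emod_eq {a b : ℤ} (h : a % 3 = b % 3) : J3periodic a = J3periodic b := by
  unfold J3periodic; rw [h]

lemma J3periodic_consecutive_sum_eq_zero (m : ℤ) :
    J3periodic m + J3periodic (m + 1) + J3periodic (m + 2) = 0 := by
  unfold J3periodic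
  rcases (by omega : m % 3 = 0 ∨ m % 3 = 1 ∨ m % 3 = 2) with h | h | h
  · rw [h, show (m + 1) % 3 = 1 by omega, show (m + 2) % 3 = 2 by omega]; norm_num
  · rw [h, show (m + 1) % 3 = 2 by omega, show (m + 2) % 3 = 0 by omega]; norm_num
  · rw [h, show (m + 1) % 3 = 0 by omega, show (m + 2) % 3 = 1 by omega]; norm_num

lemma J3periodic_add_two_mul (m r : ℤ) :
    J3periodic (m + 2 * r) = eps r * J3periodic (m + r) - J3periodic m := by
  by_cases h : (3 : ℤ) ∣ r
  · rw [eps, if_pos h, J3periodic_eq_of_emod_eq (a := m + r) (b := m) (by omega),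
      J3periodic_eq_of_emod_eq (a := m + 2 * r) (b := m) (by omega)]
    ring
  · rw [eps, if_neg h]
    have hsum := J3periodic_consecutive_sum_eq_zero m
    rcases (by omega : r % 3 = 1 ∨ r % 3 = 2) with hr | hr
    · rw [J3periodic_eq_of_emod_eq (a := m + r) (b := m + 1) (by omega),
        J3periodic_eq_of_emod_eq (a := m + 2 * r) (b := m + 2) (by omega)]
      linarith
    · rw [J3periodic_eq_of_emod_eq (a := m + r) (b := m + 2) (by omega),
        J3periodic_eq_of_emod_eq (a := m + 2 * r) (b := m + 1) (by omega)]
      linarith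

def J3binet (m : ℤ) : ℚ := (2 ^ (m + 1) + J3periodic m) / 7

lemma J3binet_add_three (m : ℤ) :
    J3binet (m + 3) = J3binet (m + 2) + J3binet (m + 1) + 2 * J3binet m := by
  have hP : J3periodic (m + 3) = J3periodic m := J3periodic_eq_of_emod_eq (by omega)
  have hsum := J3periodic_consecutive_sum_eq_zero m
  have hpow (k : ℤ) : (2 : ℚ) ^ (m + k + 1) = 2 ^ (m + 1) * 2 ^ k := by
    rw [← zpow_add₀ two_ne_zero]; ring_nf
  simp only [J3binet, hP, hpow]
  linear_combination -hsum / 7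

lemma J3fwd_eq_J3binet : ∀ k : ℕ, J3fwd k = J3binet k
  | 0 | 1 | 2 => by norm_num [J3fwd, J3binet, J3periodic]
  | k + 3 => by
    rw [J3fwd, J3fwd_eq_J3binet k, J3fwd_eq_J3binet (k + 1), J3fwd_eq_J3binet (k + 2)]
    push_cast
    exact (J3binet_add_three k).symm

lemma J3bwd_eq_J3binet : ∀ k : ℕ, J3bwd k = J3binet (-k)
  | 0 | 1 | 2 => by norm_num [J3bwd, J3binet, J3periodic]
  | k + 3 => by
    rw [J3bwd, J3bwd_eq_J3binet k, J3bwd_eq_J3binet (k + 1), J3bwd_eq_J3binet (k + 2)]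
    have h := J3binet_add_three (-(k + 3 : ℕ))
    push_cast at h ⊢
    ring_nf at h ⊢
    linarith

lemma J3_eq_J3binet (m : ℤ) : J3 m = J3binet m := by
  cases m with
  | ofNat k => exact J3fwd_eq_J3binet k
  | negSucc k => rw [J3, J3bwd_eq_J3binet, Int.negSucc_eq]; push_cast; ring_nf

theorem third_order_jacobsthal_subsequence_recurrence_general
    (r s n : ℤ) :
    J3 (r * n + s) =
      ((2 : ℚ) ^ r + eps r) * J3 (r * (n - 1) + s)
        - ((2 : ℚ) ^ r * eps r + 1) * J3 (r * (n - 2) + s)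
        + (2 : ℚ) ^ r * J3 (r * (n - 3) + s) := by
  set m := r * (n - 3) + s
  rw [show r * n + s = m + 3 * r by ring, show r * (n - 1) + s = m + 2 * r by ring,
    show r * (n - 2) + s = m + r by ring]
  have hP₂ := J3periodic_add_two_mul m r
  have hP₃ : J3periodic (m + 3 * r) = eps r * J3periodic (m + 2 * r) - J3periodic (m + r) := by
    convert J3periodic_add_two_mul (m + r) r using 2 <;> ring_nf
  have hpow (k : ℕ) : (2 : ℚ) ^ (m + k * r + 1) = 2 ^ (m + 1) * (2 ^ r) ^ k := by
    rw [← zpow_natCast, ← zpow_mul, ← zpow_add₀ two_ne_zero]; ring_nf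
  have hpow₁ := hpow 1
  have hpow₂ := hpow 2
  have hpow₃ := hpow 3
  push_cast at hpow₁ hpow₂ hpow₃
  rw [one_mul] at hpow₁
  simp only [J3_eq_J3binet, J3binet, hpow₁, hpow₂, hpow₃]
  linear_combination (hP₃ - 2 ^ r * hP₂) / 7

theorem third_order_jacobsthal_subsequence_recurrence
    (r s n : ℤ) (hr : 1 ≤ r) (hs0 : 0 ≤ s) (hsr : s < r) (hn : 3 ≤ n) :
    J3 (r * n + s) =
      ((2 : ℚ) ^ r + eps r) * J3 (r * (n - 1) + s)
        - ((2 : ℚ) ^ r * eps r + 1) * J3 (r * (n - 2) + s)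
        + (2 : ℚ) ^ r * J3 (r * (n - 3) + s) :=
  third_order_jacobsthal_subsequence_recurrence_general r s n
end

section
/- Let r be a positive integer, ε_r = 2 if r ≡ 0 (mod 3) and ε_r = −1 otherwise, and let K_{r,n} = −(2^r·ε_r + 1)·J^{(3)}_{rn} + 2^r·J^{(3)}_{r(n−1)}. Define the 3×3 rational matrices L_r = [[2^r + ε_r, −(2^r·ε_r + 1), 2^r], [1, 0, 0], [0, 1, 0]] and F_{r,n} = [[J^{(3)}_{r(n+1)}, K_{r,n}, 2^r·J^{(3)}_{rn}], [J^{(3)}_{rn}, K_{r,n−1}, 2^r·J^{(3)}_{r(n−1)}], [J^{(3)}_{r(n−1)}, K_{r,n−2}, 2^r·J^{(3)}_{r(n−2)}]]. Then for every positive integer n, J^{(3)}_r · L_r^n + 2^r · J^{(3)}_{−r} · L_r^{n−1} = F_{r,n}. -/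
/-- `K_{r,n} = −(2^r ε_r + 1) J_{rn} + 2^r J_{r(n−1)}`. -/
noncomputable def K3 (r n : ℤ) : ℚ :=
  -((2 : ℚ) ^ r * eps r + 1) * J3 (r * n) + (2 : ℚ) ^ r * J3 (r * (n - 1))

/-- The companion matrix `L_r`. -/
noncomputable def Lmat (r : ℤ) : Matrix (Fin 3) (Fin 3) ℚ :=
  !![(2 : ℚ) ^ r + eps r, -((2 : ℚ) ^ r * eps r + 1), (2 : ℚ) ^ r;
     1, 0, 0;
     0, 1, 0]

/-- The matrix `F_{r,n}`. -/
noncomputable def Fmat (r n : ℤ) : Matrix (Fin 3) (Fin 3) ℚ :=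
  !![J3 (r * (n + 1)), K3 r n, (2 : ℚ) ^ r * J3 (r * n);
     J3 (r * n), K3 r (n - 1), (2 : ℚ) ^ r * J3 (r * (n - 1));
     J3 (r * (n - 1)), K3 r (n - 2), (2 : ℚ) ^ r * J3 (r * (n - 2))]

/-- Periodicity/normalisation helper for `e`. -/
noncomputable def e (m : ℤ) : ℚ := if m % 3 = 0 then -2 else if m % 3 = 1 then 3 else -1

lemma e_congr {m k : ℤ} (h : m % 3 = k % 3) : e m = e k := by unfold e; rw [h]

lemma e_sum (a : ℤ) : e a + e (a + 1) + e (a + 2) = 0 := by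
  have h : a % 3 = 0 ∨ a % 3 = 1 ∨ a % 3 = 2 := by omega
  rcases h with h | h | h <;>
  · have h1 : (a+1) % 3 = (a % 3 + 1) % 3 := by omega
    have h2 : (a+2) % 3 = (a % 3 + 2) % 3 := by omega
    rw [h] at h1 h2
    norm_num at h1 h2
    simp [e, h, h1, h2] <;> norm_num

lemma J3fwd_closed (n : ℕ) : J3fwd n = ((2:ℚ)^((n:ℤ)+1) + e n)/7 := by
  induction n using J3fwd.induct with
  | case1 => simp [J3fwd, e]
  | case2 => simp [J3fwd, e]; norm_num
  | case3 => simp [J3fwd, e]; norm_num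
  | case4 n ih2 ih1 ih0 =>
    rw [J3fwd, ih2, ih1, ih0]
    have hsum := e_sum (n:ℤ)
    have h2 : (2:ℚ) ≠ 0 := two_ne_zero
    push_cast
    have hper : e ((n:ℤ)+2+1) = e n := by apply e_congr; omega
    rw [hper]
    simp only [zpow_add₀ h2]
    norm_num
    linear_combination (1/7 : ℚ) * hsum

lemma J3bwd_closed (n : ℕ) : J3bwd n = ((2:ℚ)^(-(n:ℤ)+1) + e (-(n:ℤ)))/7 := by
  induction n using J3bwd.induct with
  | case1 => simp [J3bwd, e]
  | case2 => simp [J3bwd]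
             norm_num [e]
  | case3 => simp [J3bwd]
             norm_num [e]
  | case4 n ih0 ih1 ih2 =>
    rw [J3bwd, ih0, ih1, ih2]
    have hsum := e_sum (-(n:ℤ) - 2)
    have h2 : (2:ℚ) ≠ 0 := two_ne_zero
    push_cast
    have hper : e (-((n:ℤ)+2+1)) = e (-(n:ℤ)) := by apply e_congr; omega
    have h1 : e (-((n:ℤ)+1)) = e (-(n:ℤ)-1) := by apply e_congr; omega
    have h60 : e (-((n:ℤ)+2)) = e (-(n:ℤ)-2) := by apply e_congr; omega
    have h61 : e (-(n:ℤ)-2+1) = e (-(n:ℤ)-1) := by apply e_congr; omega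
    have h62 : e (-(n:ℤ)-2+2) = e (-(n:ℤ)) := by apply e_congr; omega
    rw [hper, h1, h60]
    rw [h61, h62] at hsum
    rw [show -((n:ℤ)+2+1)+1 = (-(n:ℤ)+1) + (-3) by ring,
        show -((n:ℤ)+1)+1 = (-(n:ℤ)+1) + (-1) by ring,
        show -((n:ℤ)+2)+1 = (-(n:ℤ)+1) + (-2) by ring,
        show -(n:ℤ)+1 = -(n:ℤ)+1 by rfl]
    simp only [zpow_add₀ h2]
    rw [show (2:ℚ)^(-1:ℤ) = 1/2 by norm_num, show (2:ℚ)^(-2:ℤ) = 1/4 by norm_num,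
        show (2:ℚ)^(-3:ℤ) = 1/8 by norm_num, show (2:ℚ)^(1:ℤ) = 2 by norm_num]
    linear_combination (-1/14 : ℚ) * hsum

lemma J3_closed (m : ℤ) : J3 m = ((2:ℚ)^(m+1) + e m)/7 := by
  cases m with
  | ofNat n => exact J3fwd_closed n
  | negSucc n =>
    show J3bwd (n+1) = _
    rw [J3bwd_closed, Int.negSucc_eq]
    push_cast
    rfl

lemma stepA (r a : ℤ) : J3 (a + 3*r) =
    ((2:ℚ)^r + eps r) * J3 (a + 2*r) - ((2:ℚ)^r * eps r + 1) * J3 (a + r) + (2:ℚ)^r * J3 a := by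
  have h2 : (2:ℚ) ≠ 0 := two_ne_zero
  rw [J3_closed (a + 3*r), J3_closed (a + 2*r), J3_closed (a + r), J3_closed a,
    show a+3*r+1 = (a+1)+r+r+r by ring, show a+2*r+1 = (a+1)+r+r by ring,
    show a+r+1 = (a+1)+r by ring]
  simp only [zpow_add₀ h2]
  have hper : e (a+3*r) = e a := by apply e_congr; omega
  rw [hper]
  have h : r % 3 = 0 ∨ r % 3 = 1 ∨ r % 3 = 2 := by omega
  rcases h with h | h | h
  · have hd : (3:ℤ) ∣ r := by omega
    have he : eps r = 2 := by simp [eps, hd]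
    have h1 : e (a+2*r) = e a := by apply e_congr; omega
    have h0 : e (a+r) = e a := by apply e_congr; omega
    rw [he, h1, h0]; ring
  · have hd : ¬ (3:ℤ) ∣ r := by omega
    have he : eps r = -1 := by simp [eps, hd]
    have h1 : e (a+2*r) = e (a+2) := by apply e_congr; omega
    have h0 : e (a+r) = e (a+1) := by apply e_congr; omega
    rw [he, h1, h0]
    linear_combination ((1 - (2:ℚ)^r)/7) * e_sum a
  · have hd : ¬ (3:ℤ) ∣ r := by omega
    have he : eps r = -1 := by simp [eps, hd]
    have h1 : e (a+2*r) = e (a+1) := by apply e_congr; omega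
    have h0 : e (a+r) = e (a+2) := by apply e_congr; omega
    rw [he, h1, h0]
    linear_combination ((1 - (2:ℚ)^r)/7) * e_sum a

lemma stepJ (r m : ℤ) : J3 (r*(m+1)) =
    ((2:ℚ)^r + eps r) * J3 (r*m) - ((2:ℚ)^r * eps r + 1) * J3 (r*(m-1)) + (2:ℚ)^r * J3 (r*(m-2)) := by
  rw [show r*(m+1) = r*(m-2)+3*r by ring, show r*m = r*(m-2)+2*r by ring,
    show r*(m-1) = r*(m-2)+r by ring]
  exact stepA r (r*(m-2))

lemma J3_zero : J3 0 = 0 := rfl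

lemma Fstep (r m : ℤ) : Fmat r (m+1) = Lmat r * Fmat r m := by
  have s1 := stepJ r (m+1)
  rw [show m+1-1 = m by ring, show m+1-2 = m-1 by ring] at s1
  have s2 := stepJ r m
  have s3 := stepJ r (m-1)
  rw [show m-1+1 = m by ring, show m-1-1 = m-2 by ring, show m-1-2 = m-3 by ring] at s3
  ext i j
  fin_cases i <;> fin_cases j <;>
    simp [Fmat, Lmat, Matrix.mul_apply, Fin.sum_univ_three, K3,
      show m+1-1 = m by ring, show m+1-2 = m-1 by ring, show m-1-1 = m-2 by ring,
      show m-2-1 = m-3 by ring]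
  · linear_combination s1
  · linear_combination (-((2:ℚ)^r * eps r + 1)) * s2 + (2:ℚ)^r * s3
  · linear_combination (2:ℚ)^r * s2

theorem third_order_jacobsthal_matrix_identity
    (r : ℤ) (hr : 1 ≤ r) (n : ℕ) (hn : 1 ≤ n) :
    J3 r • (Lmat r) ^ n + ((2 : ℚ) ^ r * J3 (-r)) • (Lmat r) ^ (n - 1) =
      Fmat r n := by
  induction n, hn using Nat.le_induction with
  | base =>
    have b1 := stepA r (-r)
    rw [show -r+3*r = 2*r by ring, show -r+2*r = r by ring, show -r+r = 0 by ring, J3_zero] at b1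
    have b2 := stepA r (-2*r)
    rw [show -2*r+3*r = r by ring, show -2*r+2*r = 0 by ring, show -2*r+r = -r by ring,
      J3_zero] at b2
    ext i j
    fin_cases i <;> fin_cases j <;>
      simp [Fmat, Lmat, K3, pow_one, Matrix.one_apply, J3_zero,
        show ((1:ℕ):ℤ) - 1 = 0 from rfl, show ((1:ℕ):ℤ) - 2 = -1 by norm_num,
        show ((1:ℕ):ℤ) + 1 = 2 from rfl]
    all_goals (try (first | rfl | ring))
    · rw [show r*2 = 2*r by ring]; linear_combination (-1 : ℚ) * b1
    · rw [show -(r*2) = -2*r by ring]; linear_combination b2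
  | succ k hk ih =>
    obtain ⟨j, rfl⟩ : ∃ j, k = j + 1 := ⟨k-1, by omega⟩
    rw [show (((j+1)+1:ℕ):ℤ) = (((j+1):ℕ):ℤ)+1 by push_cast; ring, Fstep, ← ih]
    simp only [Nat.add_sub_cancel]
    rw [Matrix.mul_add, Matrix.mul_smul, Matrix.mul_smul, ← pow_succ', ← pow_succ']
end

section
/- Let r be a positive integer with r not divisible by 3, so that ε_r = −1 and δ_r = (2 − ε_r)(2^r − 1) = 3(2^r − 1) ≠ 0, and let S_{r,n} = Σ_{k=0}^{n} J^{(3)}_{rk}. Then for every integer n ≥ 1, S_{r,n} = (1/δ_r)·[ J^{(3)}_{r(n+1)} − (2^r(ε_r − 1) + 1)·J^{(3)}_{rn} + 2^r·J^{(3)}_{r(n−1)} − (J^{(3)}_r + 2^r·J^{(3)}_{−r}) ]. -/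
/-- `S_{r,n} = Σ_{k=0}^{n} J^{(3)}_{rk}`. -/
def S3 (r : ℤ) (n : ℕ) : ℚ := ∑ k ∈ Finset.range (n + 1), J3 (r * k)


def qq (m : ℤ) : ℚ := if m % 3 = 0 then -2 else if m % 3 = 1 then 3 else -1

lemma qq_period (m k : ℤ) : qq (m + 3 * k) = qq m := by
  simp only [qq]
  rw [show (m + 3 * k) % 3 = m % 3 by omega]

lemma qq_sum (r a : ℤ) (h3 : ¬ (3 : ℤ) ∣ r) :
    qq a + qq (a + r) + qq (a + 2 * r) = 0 := by
  have h3' : r % 3 ≠ 0 := fun h => h3 (Int.dvd_of_emod_eq_zero h)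
  simp only [qq]
  split_ifs <;> try norm_num
  all_goals omega

lemma qq_sum1 (a : ℤ) : qq a + qq (a + 1) + qq (a + 2) = 0 := by
  have := qq_sum 1 a (by norm_num)
  rw [show a + 2 * 1 = a + 2 by ring] at this
  linarith

lemma closed_fwd (n : ℕ) : J3fwd n = (2 * 2 ^ n + qq n) / 7 := by
  induction n using Nat.strong_induction_on with
  | _ n ih =>
    match n with
    | 0 => simp [J3fwd, qq]
    | 1 => norm_num [J3fwd, qq]
    | 2 => norm_num [J3fwd, qq]
    | k + 3 =>
      rw [J3fwd, ih (k+2) (by omega), ih (k+1) (by omega), ih k (by omega)]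
      have hp : qq ((k : ℤ) + 3) = qq k := by
        simpa using qq_period k 1
      have h2 : qq ((k:ℤ) + 2) = -qq k - qq ((k:ℤ) + 1) := by
        have := qq_sum1 (k:ℤ); linarith
      push_cast
      rw [hp, h2]
      ring

lemma closed_bwd (n : ℕ) : J3bwd n = (2 * ((2:ℚ) ^ n)⁻¹ + qq (-(n:ℤ))) / 7 := by
  induction n using Nat.strong_induction_on with
  | _ n ih =>
    match n with
    | 0 => simp [J3bwd, qq]
    | 1 => norm_num [J3bwd, qq]
    | 2 => norm_num [J3bwd, qq]
    | k + 3 =>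
      rw [J3bwd, ih (k+2) (by omega), ih (k+1) (by omega), ih k (by omega)]
      have hp : qq (-((k : ℤ) + 3)) = qq (-(k:ℤ)) := by
        rw [show -((k:ℤ)+3) = -(k:ℤ) + 3 * (-1) by ring, qq_period]
      have h2 : qq (-((k:ℤ) + 2)) = -qq (-(k:ℤ)) - qq (-((k:ℤ)+1)) := by
        have := qq_sum1 (-(k:ℤ) - 2)
        rw [show -(k:ℤ)-2+1 = -((k:ℤ)+1) by ring, show -(k:ℤ)-2+2 = -(k:ℤ) by ring,
            show -(k:ℤ)-2 = -((k:ℤ)+2) by ring] at this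
        linarith
      push_cast
      rw [hp, h2]
      have hk : ((2:ℚ) ^ k) ≠ 0 := by positivity
      field_simp
      ring

lemma closed (m : ℤ) : J3 m = (2 * (2:ℚ) ^ m + qq m) / 7 := by
  cases m with
  | ofNat n => rw [show J3 (Int.ofNat n) = J3fwd n from rfl, closed_fwd]
               norm_num [zpow_natCast]
  | negSucc n =>
      rw [show J3 (Int.negSucc n) = J3bwd (n+1) from rfl, closed_bwd]
      have h : ((n:ℤ) + 1) = ((n + 1 : ℕ) : ℤ) := by push_cast; ring
      rw [Int.negSucc_eq, h, zpow_neg, zpow_natCast]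

lemma key (r a : ℤ) (h3 : ¬ (3 : ℤ) ∣ r) :
    J3 (a + 3 * r) = ((2:ℚ) ^ r - 1) * J3 (a + 2 * r) + ((2:ℚ) ^ r - 1) * J3 (a + r)
      + (2:ℚ) ^ r * J3 a := by
  rw [closed, closed, closed, closed]
  have hp : qq (a + 3 * r) = qq a := qq_period a r
  have hs := qq_sum r a h3
  have h2 : qq (a + 2 * r) = -qq a - qq (a + r) := by linarith
  rw [hp, h2]
  have e : ∀ b c : ℤ, (2:ℚ) ^ (b + c) = 2 ^ b * 2 ^ c := fun b c => zpow_add₀ two_ne_zero b c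
  have ha3 : (2:ℚ) ^ (a + 3 * r) = 2 ^ a * 2 ^ r * 2 ^ r * 2 ^ r := by
    rw [show a + 3 * r = a + r + r + r by ring, e, e, e]
  have ha2 : (2:ℚ) ^ (a + 2 * r) = 2 ^ a * 2 ^ r * 2 ^ r := by
    rw [show a + 2 * r = a + r + r by ring, e, e]
  rw [ha3, ha2, e]
  ring

lemma two_zpow_ne_one (r : ℤ) (hr : 1 ≤ r) : (2:ℚ) ^ r ≠ 1 := by
  have : (1:ℚ) < 2 ^ r := one_lt_zpow₀ (by norm_num) (by omega)
  linarith

theorem third_order_jacobsthal_sum_formula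
    (r : ℤ) (hr : 1 ≤ r) (h3 : ¬ (3 : ℤ) ∣ r) (n : ℕ) (hn : 1 ≤ n) :
    S3 r n =
      (1 / ((2 - (-1 : ℚ)) * ((2 : ℚ) ^ r - 1))) *
        (J3 (r * ((n : ℤ) + 1)) - ((2 : ℚ) ^ r * ((-1 : ℚ) - 1) + 1) * J3 (r * n)
          + (2 : ℚ) ^ r * J3 (r * ((n : ℤ) - 1)) - (J3 r + (2 : ℚ) ^ r * J3 (-r))) := by
  have hδ : (2:ℚ) ^ r - 1 ≠ 0 := sub_ne_zero.mpr (two_zpow_ne_one r hr)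
  induction n with
  | zero => omega
  | succ m ihm =>
    rcases Nat.eq_or_lt_of_le hn with h1 | h1
    · -- base case: m + 1 = 1, i.e. m = 0
      have hm : m = 0 := by omega
      subst hm
      have hkey := key r (-r) h3
      rw [show -r + 3 * r = 2 * r by ring, show -r + 2 * r = r by ring,
          show -r + r = 0 by ring] at hkey
      have h0 : J3 0 = 0 := rfl
      have e1 : S3 r 1 = J3 (r * 0) + J3 (r * 1) := by
        simp [S3, Finset.sum_range_succ]
      rw [e1]
      push_cast
      rw [mul_zero, mul_one, h0]
      rw [show r * (2 : ℤ) = 2 * r by ring, hkey, h0]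
      field_simp
      ring
    · -- inductive step: m ≥ 1
      have hm : 1 ≤ m := by omega
      have ih := ihm hm
      have hstep : S3 r (m + 1) = S3 r m + J3 (r * (m + 1 : ℕ)) := by
        simp [S3, Finset.sum_range_succ]
      have hkey := key r (r * ((m:ℤ) - 1)) h3
      rw [show r * ((m:ℤ) - 1) + 3 * r = r * ((m:ℤ) + 2) by ring,
          show r * ((m:ℤ) - 1) + 2 * r = r * ((m:ℤ) + 1) by ring,
          show r * ((m:ℤ) - 1) + r = r * (m:ℤ) by ring] at hkey
      rw [hstep, ih]
      push_cast
      rw [show r * ((m:ℤ) + 1 + 1) = r * ((m:ℤ) + 2) by ring,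
          show r * ((m:ℤ) + 1 - 1) = r * (m:ℤ) by ring, hkey]
      field_simp
      ring
end
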